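/- Every order unit space $(V,C,u)$ over an ordered subfield $\mathbb{F}$ of $\mathbb{R}$ admits a probability measure, i.e., there exists a linear functional $\rho : V \to \mathbb{R}$ with $\rho(a) \geq 0$ for all $a \in C$ and $\rho(u) = 1$. -/

import Mathlib

/-!
The functional `l • u ↦ l` on the line spanned by `u` is nonnegative on `C` because `-u ∉ C`,
and every vector lies above that line because `u` is an order unit, so M. Riesz's extension
theorem extends it to a positive functional on `V`. The extension theorem only needs an ordered
field of scalars acting monotonically on `ℝ`: in each one-dimensional extension step the new value
is a real number squeezed between a supremum and an infimum, so completeness is needed in `ℝ`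
only, not in the scalars.
-/

/-- An order unit space `(V, C, u)` over an ordered field `𝔽`. -/
structure OUS (𝔽 V : Type*) [Field 𝔽] [LinearOrder 𝔽] [IsStrictOrderedRing 𝔽] [AddCommGroup V] [Module 𝔽 V] where
  C : Set V
  u : V
  add_mem : ∀ ⦃a⦄, a ∈ C → ∀ ⦃b⦄, b ∈ C → a + b ∈ C
  smul_mem : ∀ l : 𝔽, 0 ≤ l → ∀ ⦃a⦄, a ∈ C → l • a ∈ C
  u_mem : u ∈ C
  neg_u_not_mem : -u ∉ C
  order_unit : ∀ a : V, ∃ l : 𝔽, l • u + a ∈ C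

open Submodule

namespace LinearPMap

theorem lt_supSpanSingleton {K E F : Type*} [DivisionRing K] [AddCommGroup E] [Module K E]
    [AddCommGroup F] [Module K F] (f : E →ₗ.[K] F) {y : E} (z : F) (hy : y ∉ f.domain) :
    f < f.supSpanSingleton y z hy := by
  refine lt_of_le_of_ne (f.left_le_sup _ _) fun h => hy ?_
  rw [h, domain_supSpanSingleton]
  exact mem_sup_right (mem_span_singleton_self y)

variable {𝕜 E : Type*} [Field 𝕜] [LinearOrder 𝕜] [IsStrictOrderedRing 𝕜]
  [AddCommGroup E] [Module 𝕜 E] [Module 𝕜 ℝ]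

def IsNonnegOn (f : E →ₗ.[𝕜] ℝ) (s : Set E) : Prop :=
  ∀ x : f.domain, (x : E) ∈ s → 0 ≤ f x

variable (s : PointedCone 𝕜 E) (f : E →ₗ.[𝕜] ℝ)

theorem exists_separating_value (hf : f.IsNonnegOn s)
    (dense : ∀ y, ∃ x : f.domain, (x : E) + y ∈ s) (y : E) :
    ∃ c : ℝ, (∀ x : f.domain, -(x : E) - y ∈ s → f x ≤ c) ∧
      ∀ x : f.domain, (x : E) + y ∈ s → c ≤ f x := by
  have f_le : ∀ xn xp : f.domain, -(xn : E) - y ∈ s → (xp : E) + y ∈ s → f xn ≤ f xp := by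
    intro xn xp hxn hxp
    have hsum : (xp : E) + y + (-(xn : E) - y) = ↑(xp - xn) := by push_cast; abel
    have := hf (xp - xn) (hsum ▸ s.add_mem hxp hxn)
    rwa [map_sub, sub_nonneg] at this
  obtain ⟨xp, hxp⟩ := dense y
  obtain ⟨xn, hxn⟩ := dense (-y)
  have hxn' : -((-xn : f.domain) : E) - y ∈ s := by simpa [sub_eq_add_neg] using hxn
  refine ⟨sSup (f '' {x | -(x : E) - y ∈ s}), fun x hx => ?_, fun x hx => ?_⟩
  · exact le_csSup ⟨f xp, by rintro _ ⟨x, hx, rfl⟩; exact f_le x xp hx hxp⟩ ⟨x, hx, rfl⟩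
  · exact csSup_le ⟨_, -xn, hxn', rfl⟩ (by rintro _ ⟨x', hx', rfl⟩; exact f_le x' x hx' hx)

theorem isNonnegOn_supSpanSingleton [PosSMulMono 𝕜 ℝ] (hf : f.IsNonnegOn s) {y : E}
    (hy : y ∉ f.domain) {c : ℝ}
    (le_c : ∀ x : f.domain, -(x : E) - y ∈ s → f x ≤ c)
    (c_le : ∀ x : f.domain, (x : E) + y ∈ s → c ≤ f x) :
    (f.supSpanSingleton y (-c) hy).IsNonnegOn s := by
  rintro ⟨z, hz⟩ hzs
  obtain ⟨x, hx, _, hy', rfl⟩ := mem_sup.1 hz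
  obtain ⟨r, rfl⟩ := mem_span_singleton.1 hy'
  rw [supSpanSingleton_apply_mk _ _ _ _ _ hx, smul_neg, ← sub_eq_add_neg, sub_nonneg]
  rcases lt_trichotomy r 0 with hr | rfl | hr
  · have : -(r⁻¹ • x) - y ∈ s := by
      rwa [← s.smul_mem_iff (neg_pos.2 hr), smul_sub, smul_neg, neg_smul, neg_neg, smul_smul,
        mul_inv_cancel₀ hr.ne, one_smul, sub_eq_add_neg, neg_smul, neg_neg]
    have := smul_le_smul_of_nonneg_left (le_c (r⁻¹ • ⟨x, hx⟩) this) (neg_nonneg.2 hr.le)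
    rwa [map_smul, smul_smul, neg_mul, mul_inv_cancel₀ hr.ne, neg_smul, one_smul, neg_smul,
      neg_le_neg_iff] at this
  · simpa using hf ⟨x, hx⟩ (by simpa using hzs)
  · have : r⁻¹ • x + y ∈ s := by
      rwa [← s.smul_mem_iff hr, smul_add, smul_smul, mul_inv_cancel₀ hr.ne', one_smul]
    have := smul_le_smul_of_nonneg_left (c_le (r⁻¹ • ⟨x, hx⟩) this) hr.le
    rwa [map_smul, smul_smul, mul_inv_cancel₀ hr.ne', one_smul] at this

theorem isNonnegOn_sSup {c : Set (E →ₗ.[𝕜] ℝ)} (hne : c.Nonempty) (hc : DirectedOn (· ≤ ·) c)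
    (hcs : ∀ g ∈ c, g.IsNonnegOn s) : (LinearPMap.sSup c hc).IsNonnegOn s := by
  rintro ⟨x, hx⟩ hxs
  obtain ⟨g, hgc, hxg⟩ := (mem_domain_sSup_iff hne hc).1 hx
  exact (hcs g hgc ⟨x, hxg⟩ hxs).trans_eq (LinearPMap.sSup_apply hc hgc ⟨x, hxg⟩).symm

variable [PosSMulMono 𝕜 ℝ]

theorem exists_lt_isNonnegOn (hf : f.IsNonnegOn s) (dense : ∀ y, ∃ x : f.domain, (x : E) + y ∈ s)
    (hdom : f.domain ≠ ⊤) : ∃ g, f < g ∧ g.IsNonnegOn s := by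
  obtain ⟨y, -, hy⟩ := SetLike.exists_of_lt (lt_top_iff_ne_top.2 hdom)
  obtain ⟨c, le_c, c_le⟩ := f.exists_separating_value s hf dense y
  exact ⟨_, f.lt_supSpanSingleton (-c) hy, f.isNonnegOn_supSpanSingleton s hf hy le_c c_le⟩

theorem exists_le_isNonnegOn_domain_eq_top (hf : f.IsNonnegOn s)
    (dense : ∀ y, ∃ x : f.domain, (x : E) + y ∈ s) :
    ∃ g, f ≤ g ∧ g.domain = ⊤ ∧ g.IsNonnegOn s := by
  obtain ⟨g, hfg, hg, hmax⟩ := zorn_le_nonempty₀ {g : E →ₗ.[𝕜] ℝ | g.IsNonnegOn s}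
    (fun c hcs hchain y hy => ⟨_, isNonnegOn_sSup s ⟨y, hy⟩ hchain.directedOn hcs,
      fun _ => LinearPMap.le_sSup hchain.directedOn⟩) f hf
  refine ⟨g, hfg, by_contra fun hdom => ?_, hg⟩
  have dense' (y : E) : ∃ x : g.domain, (x : E) + y ∈ s :=
    let ⟨x, hx⟩ := dense y
    ⟨inclusion hfg.1 x, hx⟩
  obtain ⟨g', hgg', hg'⟩ := g.exists_lt_isNonnegOn s hg dense' hdom
  exact hgg'.not_ge (hmax hg' hgg'.le)

theorem riesz_extension (hf : f.IsNonnegOn s) (dense : ∀ y, ∃ x : f.domain, (x : E) + y ∈ s) :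
    ∃ g : E →ₗ[𝕜] ℝ, (∀ x : f.domain, g x = f x) ∧ ∀ x ∈ s, 0 ≤ g x := by
  obtain ⟨g, hfg, htop, hg⟩ := f.exists_le_isNonnegOn_domain_eq_top s hf dense
  exact ⟨g.toFun ∘ₗ (LinearEquiv.ofTop _ htop).symm, fun x => (hfg.2 rfl).symm,
    fun x hx => hg _ hx⟩

end LinearPMap

namespace OUS

variable {𝔽 V : Type*} [Field 𝔽] [LinearOrder 𝔽] [IsStrictOrderedRing 𝔽] [AddCommGroup V]
  [Module 𝔽 V] (O : OUS 𝔽 V)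

def cone : PointedCone 𝔽 V where
  carrier := O.C
  add_mem' := fun ha hb => O.add_mem ha hb
  zero_mem' := by simpa using O.smul_mem 0 le_rfl O.u_mem
  smul_mem' := fun r _ ha => O.smul_mem r r.2 ha

theorem u_ne_zero : O.u ≠ 0 := fun h => O.neg_u_not_mem <| by
  rw [h, neg_zero]
  exact O.cone.zero_mem

theorem nonneg_of_smul_u_mem {l : 𝔽} (hl : l • O.u ∈ O.C) : 0 ≤ l := by
  by_contra! h
  have := O.smul_mem (-l⁻¹) (by simpa using h.le) hl
  rw [smul_smul, neg_mul, inv_mul_cancel₀ h.ne, neg_smul, one_smul] at this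
  exact O.neg_u_not_mem this

theorem exists_state [Module 𝔽 ℝ] [PosSMulMono 𝔽 ℝ] :
    ∃ ρ : V →ₗ[𝔽] ℝ, (∀ a ∈ O.C, 0 ≤ ρ a) ∧ ρ O.u = 1 := by
  let f : V →ₗ.[𝔽] ℝ := LinearPMap.mkSpanSingleton O.u 1 O.u_ne_zero
  have hf : f.IsNonnegOn O.cone := by
    rintro ⟨x, hx⟩ hxC
    obtain ⟨l, rfl⟩ := Submodule.mem_span_singleton.1 hx
    rw [LinearPMap.mkSpanSingleton'_apply]
    exact smul_nonneg (O.nonneg_of_smul_u_mem hxC) zero_le_one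
  have dense (y : V) : ∃ x : f.domain, (x : V) + y ∈ O.cone :=
    let ⟨l, hl⟩ := O.order_unit y
    ⟨⟨l • O.u, Submodule.smul_mem _ l (Submodule.mem_span_singleton_self _)⟩, hl⟩
  obtain ⟨ρ, hρf, hρ⟩ := f.riesz_extension O.cone hf dense
  exact ⟨ρ, hρ, (hρf ⟨O.u, Submodule.mem_span_singleton_self _⟩).trans
    (LinearPMap.mkSpanSingleton_apply _ _ _ _)⟩

end OUS

instance Subfield.instPosSMulMonoReal (F : Subfield ℝ) : PosSMulMono F ℝ :=
  ⟨fun _ hr _ _ hab => mul_le_mul_of_nonneg_left hab hr⟩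

/-- Every order unit space over an ordered subfield of `ℝ` admits a probability measure. -/
theorem stmt2 (F : Subfield ℝ) {V : Type*} [AddCommGroup V] [Module F V] (O : OUS F V) :
    ∃ ρ : V →ₗ[F] ℝ, (∀ a ∈ O.C, 0 ≤ ρ a) ∧ ρ O.u = 1 :=
  O.exists_state
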